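/- The surface energy density g is Lipschitz continuous on [0,∞) with Lipschitz constant ℓ, i.e. |g(s₁) − g(s₂)| ≤ ℓ |s₁ − s₂| for all s₁, s₂ ≥ 0. -/

import Mathlib

open MeasureTheory Set Filter Topology

/-- A pair of `H¹` functions on the interval `(0,T)`, described through their
absolutely continuous representatives `a`, `b` together with their
square-integrable weak derivatives `da`, `db`. -/
structure H1Pair (T : ℝ) where
  a : ℝ → ℝ
  b : ℝ → ℝ
  da : ℝ → ℝ
  db : ℝ → ℝ
  da_mem : MeasureTheory.MemLp da 2 (MeasureTheory.volume.restrict (Set.Ioo (0:ℝ) T))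
  db_mem : MeasureTheory.MemLp db 2 (MeasureTheory.volume.restrict (Set.Ioo (0:ℝ) T))
  a_ftc : ∀ x ∈ Set.Icc (0:ℝ) T, a x = a 0 + ∫ t in Set.Ioc (0:ℝ) x, da t
  b_ftc : ∀ x ∈ Set.Icc (0:ℝ) T, b x = b 0 + ∫ t in Set.Ioc (0:ℝ) x, db t

/-- Membership in the admissible class `U_s(0,T)`: `0 ≤ β ≤ 1`, `α(0)=0`, `α(T)=s`,
`β(0)=β(T)=1`. -/
def H1Pair.Admissible {T : ℝ} (s : ℝ) (P : H1Pair T) : Prop :=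
  (∀ t ∈ Set.Icc (0:ℝ) T, P.b t ∈ Set.Icc (0:ℝ) 1) ∧
  P.a 0 = 0 ∧ P.a T = s ∧ P.b 0 = 1 ∧ P.b T = 1

/-- The continuous extension of `x ↦ (1 - x) * f x` to `[0,1]`, with value `l` at `1`. -/
noncomputable def damageExt (f : ℝ → ℝ) (l : ℝ) (x : ℝ) : ℝ :=
  if x = 1 then l else (1 - x) * f x

/-- The surface energy of a pair: `∫₀¹ |1-β| √(f(β)² |α'|² + |β'|²) dt`, written as
`∫₀¹ √(((1-β) f(β))² |α'|² + (1-β)² |β'|²) dt`, where at points with `β = 1` the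
product `(1-β) f(β)` is interpreted as `l`. -/
noncomputable def surfEnergy (f : ℝ → ℝ) (l : ℝ) (P : H1Pair 1) : ENNReal :=
  ∫⁻ t in Set.Ioo (0:ℝ) 1,
    ENNReal.ofReal (Real.sqrt ((damageExt f l (P.b t))^2 * (P.da t)^2
      + (1 - P.b t)^2 * (P.db t)^2))

/-- The surface energy density `g(s)`. -/
noncomputable def surfDensity (f : ℝ → ℝ) (l : ℝ) (s : ℝ) : ℝ :=
  (⨅ (P : H1Pair 1) (_ : P.Admissible s), surfEnergy f l P).toReal

/-- `f` is an admissible damage function with limit value `l`: it is continuous,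
nondecreasing and nonnegative on `[0,1)`, vanishes exactly at `0`, `l ∈ (0,∞)`, and
`(1-s) f(s) → l` as `s → 1⁻`. -/
def AdmissibleDamage (f : ℝ → ℝ) (l : ℝ) : Prop :=
  ContinuousOn f (Set.Ico 0 1) ∧
  MonotoneOn f (Set.Ico 0 1) ∧
  (∀ x ∈ Set.Ico (0:ℝ) 1, 0 ≤ f x) ∧
  (∀ x ∈ Set.Ico (0:ℝ) 1, (f x = 0 ↔ x = 0)) ∧
  0 < l ∧
  Filter.Tendsto (fun x => (1 - x) * f x) (nhdsWithin 1 (Set.Iio 1)) (nhds l)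

section Aux

open ENNReal

instance : IsFiniteMeasure (volume.restrict (Ioo (0:ℝ) 1)) :=
  ⟨by rw [Measure.restrict_apply_univ, Real.volume_Ioo]; exact ENNReal.ofReal_lt_top⟩

lemma map_half :
    Measure.map (fun t : ℝ => 2 * t) (volume.restrict (Ioo 0 (1/2)))
      = ENNReal.ofReal (1/2) • volume.restrict (Ioo (0:ℝ) 1) := by
  have h : (fun t : ℝ => 2 * t) ⁻¹' (Ioo 0 1) = Ioo 0 (1/2) := by
    ext t
    simp only [mem_preimage, mem_Ioo]
    constructor
    · rintro ⟨h1, h2⟩; exact ⟨by linarith, by linarith⟩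
    · rintro ⟨h1, h2⟩; exact ⟨by linarith, by linarith⟩
  rw [← h, ← Measure.restrict_map (measurable_const_mul 2) measurableSet_Ioo,
    Real.map_volume_mul_left (two_ne_zero), Measure.restrict_smul]
  have habs : |(2:ℝ)⁻¹| = 1/2 := by norm_num
  rw [habs]

lemma mp_half :
    MeasurePreserving (fun t : ℝ => 2 * t) (volume.restrict (Ioo 0 (1/2)))
      (ENNReal.ofReal (1/2) • volume.restrict (Ioo (0:ℝ) 1)) :=
  ⟨measurable_const_mul 2, map_half⟩

lemma memℒp_comp_two_mul {g : ℝ → ℝ} (hg : MemLp g 2 (volume.restrict (Ioo (0:ℝ) 1))) :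
    MemLp (fun t => g (2 * t)) 2 (volume.restrict (Ioo (0:ℝ) (1/2))) :=
  (hg.smul_measure ENNReal.ofReal_ne_top).comp_measurePreserving mp_half

lemma cov_lintegral {G : ℝ → ℝ≥0∞} (hG : AEMeasurable G (volume.restrict (Ioo (0:ℝ) 1))) :
    ∫⁻ t in Ioo (0:ℝ) (1/2), G (2 * t)
      = ENNReal.ofReal (1/2) * ∫⁻ u in Ioo (0:ℝ) 1, G u := by
  have h1 : AEMeasurable G (Measure.map (fun t : ℝ => 2 * t) (volume.restrict (Ioo 0 (1/2)))) := by
    rw [map_half]; exact hG.smul_measure _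
  rw [← MeasureTheory.lintegral_map' h1 (measurable_const_mul 2).aemeasurable, map_half,
    lintegral_smul_measure, smul_eq_mul]

lemma cov_integral (g : ℝ → ℝ) {x : ℝ} (hx : 0 ≤ x) :
    ∫ t in Ioc (0:ℝ) x, 2 * g (2 * t) = ∫ u in Ioc (0:ℝ) (2 * x), g u := by
  rw [← intervalIntegral.integral_of_le hx, ← intervalIntegral.integral_of_le (by linarith : (0:ℝ) ≤ 2 * x)]
  rw [intervalIntegral.integral_const_mul]
  have h := intervalIntegral.smul_integral_comp_mul_left (f := g) (a := (0:ℝ)) (b := x) 2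
  simpa [smul_eq_mul] using h

lemma piecewise_memℒp {F : ℝ → ℝ} (c : ℝ) (hF : MemLp F 2 (volume.restrict (Ioo (0:ℝ) (1/2)))) :
    MemLp (fun t => if t < 1/2 then F t else c) 2 (volume.restrict (Ioo (0:ℝ) 1)) := by
  have h1 : MemLp ((Iio (1/2:ℝ)).indicator F) 2 (volume.restrict (Ioo (0:ℝ) 1)) := by
    rw [memLp_indicator_iff_restrict measurableSet_Iio,
      Measure.restrict_restrict measurableSet_Iio]
    have he : Iio (1/2:ℝ) ∩ Ioo 0 1 = Ioo 0 (1/2) := by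
      ext t
      simp only [mem_inter_iff, mem_Iio, mem_Ioo]
      constructor
      · rintro ⟨h1, h2, h3⟩; exact ⟨h2, h1⟩
      · rintro ⟨h1, h2⟩; exact ⟨h2, h1, by linarith⟩
    rwa [he]
  have h2 : MemLp ((Iio (1/2:ℝ))ᶜ.indicator (fun _ => c)) 2 (volume.restrict (Ioo (0:ℝ) 1)) :=
    (memLp_const c).indicator measurableSet_Iio.compl
  have h3 := h1.add h2
  have he : (fun t => if t < 1/2 then F t else c)
      = (Iio (1/2:ℝ)).indicator F + (Iio (1/2:ℝ))ᶜ.indicator (fun _ => c) := by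
    funext t
    simp only [Pi.add_apply, Set.indicator_apply, mem_Iio, mem_compl_iff, not_lt]
    by_cases h : t < 1/2
    · rw [if_pos h, if_pos h, if_neg (not_le.mpr h), add_zero]
    · rw [if_neg h, if_neg h, if_pos (not_lt.mp h), zero_add]
  rwa [he]

lemma damageExt_continuousOn {f : ℝ → ℝ} {l : ℝ} (hf : AdmissibleDamage f l) :
    ContinuousOn (damageExt f l) (Icc 0 1) := by
  obtain ⟨hc, -, -, -, -, hlim⟩ := hf
  intro x hx
  rcases eq_or_lt_of_le hx.2 with h1 | h1
  · subst h1
    have hval : damageExt f l 1 = l := if_pos rfl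
    rw [ContinuousWithinAt, hval]
    have hsub : Icc (0:ℝ) 1 ⊆ Iio 1 ∪ {1} := by
      intro y hy
      rcases lt_or_eq_of_le hy.2 with h | h
      · exact Or.inl h
      · exact Or.inr (by simp [h])
    refine Tendsto.mono_left ?_ (nhdsWithin_mono _ hsub)
    rw [nhdsWithin_union]
    refine tendsto_sup.mpr ⟨?_, ?_⟩
    · refine Tendsto.congr' ?_ hlim
      filter_upwards [eventually_mem_nhdsWithin] with y hy
      exact (if_neg (ne_of_lt hy)).symm
    · rw [nhdsWithin_singleton]
      have h := tendsto_pure_nhds (damageExt f l) 1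
      rwa [hval] at h
  · have hmem : Ico (0:ℝ) 1 ∈ 𝓝[Icc (0:ℝ) 1] x := by
      rw [mem_nhdsWithin]
      exact ⟨Iio 1, isOpen_Iio, h1, fun y hy => ⟨hy.2.1, hy.1⟩⟩
    have hg : ContinuousWithinAt (fun y => (1 - y) * f y) (Icc (0:ℝ) 1) x := by
      have h0 : ContinuousWithinAt (fun y => (1 - y) * f y) (Ico (0:ℝ) 1) x :=
        (continuousWithinAt_const.sub continuousWithinAt_id).mul (hc x ⟨hx.1, h1⟩)
      exact h0.mono_of_mem_nhdsWithin hmem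
    refine hg.congr_of_eventuallyEq ?_ (if_neg (ne_of_lt h1))
    filter_upwards [hmem] with y hy
    exact if_neg (ne_of_lt hy.2)

lemma b_continuousOn (P : H1Pair 1) : ContinuousOn P.b (Icc (0:ℝ) 1) := by
  have h1 : Integrable P.db (volume.restrict (Ioo (0:ℝ) 1)) := P.db_mem.integrable one_le_two
  have h2 : IntegrableOn P.db (Icc (0:ℝ) 1) volume := by
    have he : volume.restrict (Ioo (0:ℝ) 1) = volume.restrict (Icc (0:ℝ) 1) :=
      Measure.restrict_congr_set Ioo_ae_eq_Icc
    rw [IntegrableOn, ← he]; exact h1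
  have hcont := intervalIntegral.continuousOn_primitive (μ := volume) (a := (0:ℝ)) (b := 1) h2
  exact (continuousOn_const.add hcont).congr fun x hx => P.b_ftc x hx

end Aux

section Aux2

open ENNReal

/-- The integrand of the surface energy. -/
noncomputable def intg (f : ℝ → ℝ) (l : ℝ) (P : H1Pair 1) (t : ℝ) : ℝ≥0∞ :=
  ENNReal.ofReal (Real.sqrt ((damageExt f l (P.b t))^2 * (P.da t)^2
    + (1 - P.b t)^2 * (P.db t)^2))

lemma intg_aemeasurable {f : ℝ → ℝ} {l s : ℝ} (hf : AdmissibleDamage f l)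
    (P : H1Pair 1) (hP : P.Admissible s) :
    AEMeasurable (intg f l P) (volume.restrict (Ioo (0:ℝ) 1)) := by
  have hbc : ContinuousOn P.b (Icc (0:ℝ) 1) := b_continuousOn P
  have hcomp : ContinuousOn (fun t => damageExt f l (P.b t)) (Icc (0:ℝ) 1) :=
    (damageExt_continuousOn hf).comp hbc fun t ht => hP.1 t ht
  have hmono : volume.restrict (Ioo (0:ℝ) 1) ≤ volume.restrict (Icc (0:ℝ) 1) :=
    Measure.restrict_mono Ioo_subset_Icc_self le_rfl
  have h₁ : AEMeasurable (fun t => damageExt f l (P.b t)) (volume.restrict (Ioo (0:ℝ) 1)) :=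
    (hcomp.aemeasurable measurableSet_Icc).mono_measure hmono
  have hb₁ : AEMeasurable P.b (volume.restrict (Ioo (0:ℝ) 1)) :=
    (hbc.aemeasurable measurableSet_Icc).mono_measure hmono
  have hda₁ : AEMeasurable P.da (volume.restrict (Ioo (0:ℝ) 1)) :=
    P.da_mem.aestronglyMeasurable.aemeasurable
  have hdb₁ : AEMeasurable P.db (volume.restrict (Ioo (0:ℝ) 1)) :=
    P.db_mem.aestronglyMeasurable.aemeasurable
  have hA : AEMeasurable (fun t => (damageExt f l (P.b t))^2 * (P.da t)^2
      + (1 - P.b t)^2 * (P.db t)^2) (volume.restrict (Ioo (0:ℝ) 1)) := by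
    simp only [pow_two]
    exact ((h₁.mul h₁).mul (hda₁.mul hda₁)).add
      (((aemeasurable_const.sub hb₁).mul (aemeasurable_const.sub hb₁)).mul (hdb₁.mul hdb₁))
  exact (ENNReal.measurable_ofReal.comp Real.continuous_sqrt.measurable).comp_aemeasurable hA

lemma exists_competitor {f : ℝ → ℝ} {l : ℝ} (hf : AdmissibleDamage f l)
    (s₁ s₂ : ℝ) (P : H1Pair 1) (hP : P.Admissible s₂) :
    ∃ Q : H1Pair 1, Q.Admissible s₁ ∧
      surfEnergy f l Q ≤ surfEnergy f l P + ENNReal.ofReal (l * |s₁ - s₂|) := by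
  have hl0 : 0 ≤ l := le_of_lt hf.2.2.2.2.1
  obtain ⟨hb01, ha0, haT, hb0, hbT⟩ := hP
  -- the half-point is a.e. avoided
  have hae : ∀ᵐ t : ℝ ∂(volume : Measure ℝ), t ≠ (1/2:ℝ) := by
    rw [ae_iff]
    simp only [not_not, Set.setOf_eq_eq_singleton]
    exact measure_singleton _
  set Qa : ℝ → ℝ := fun t => if t ≤ 1/2 then P.a (2 * t) else s₂ + (2 * t - 1) * (s₁ - s₂) with hQa_def
  set Qb : ℝ → ℝ := fun t => if t ≤ 1/2 then P.b (2 * t) else 1 with hQb_def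
  set Qda : ℝ → ℝ := fun t => if t < 1/2 then 2 * P.da (2 * t) else 2 * (s₁ - s₂) with hQda_def
  set Qdb : ℝ → ℝ := fun t => if t < 1/2 then 2 * P.db (2 * t) else 0 with hQdb_def
  -- Memℒp
  have hda2 : MemLp (fun t => 2 * P.da (2 * t)) 2 (volume.restrict (Ioo (0:ℝ) (1/2))) :=
    (memℒp_comp_two_mul P.da_mem).const_mul 2
  have hdb2 : MemLp (fun t => 2 * P.db (2 * t)) 2 (volume.restrict (Ioo (0:ℝ) (1/2))) :=
    (memℒp_comp_two_mul P.db_mem).const_mul 2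
  have hQda_mem : MemLp Qda 2 (volume.restrict (Ioo (0:ℝ) 1)) := piecewise_memℒp _ hda2
  have hQdb_mem : MemLp Qdb 2 (volume.restrict (Ioo (0:ℝ) 1)) := piecewise_memℒp _ hdb2
  -- integrals over the first half
  have hint_da : ∀ x : ℝ, x ∈ Icc (0:ℝ) (1/2) →
      ∫ t in Ioc (0:ℝ) x, Qda t = ∫ u in Ioc (0:ℝ) (2 * x), P.da u := by
    intro x hx
    have h1 : ∫ t in Ioc (0:ℝ) x, Qda t = ∫ t in Ioc (0:ℝ) x, 2 * P.da (2 * t) := by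
      refine setIntegral_congr_ae measurableSet_Ioc ?_
      filter_upwards [hae] with t ht hmem
      have : t < 1/2 := lt_of_le_of_ne (le_trans hmem.2 hx.2) ht
      simp only [hQda_def, if_pos this]
    rw [h1, cov_integral P.da hx.1]
  have hint_db : ∀ x : ℝ, x ∈ Icc (0:ℝ) (1/2) →
      ∫ t in Ioc (0:ℝ) x, Qdb t = ∫ u in Ioc (0:ℝ) (2 * x), P.db u := by
    intro x hx
    have h1 : ∫ t in Ioc (0:ℝ) x, Qdb t = ∫ t in Ioc (0:ℝ) x, 2 * P.db (2 * t) := by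
      refine setIntegral_congr_ae measurableSet_Ioc ?_
      filter_upwards [hae] with t ht hmem
      have : t < 1/2 := lt_of_le_of_ne (le_trans hmem.2 hx.2) ht
      simp only [hQdb_def, if_pos this]
    rw [h1, cov_integral P.db hx.1]
  -- integrability facts
  have hQda_int : IntegrableOn Qda (Ioo (0:ℝ) 1) volume := hQda_mem.integrable one_le_two
  have hQdb_int : IntegrableOn Qdb (Ioo (0:ℝ) 1) volume := hQdb_mem.integrable one_le_two
  -- FTC for Qa
  have hQa_ftc : ∀ x ∈ Icc (0:ℝ) 1, Qa x = Qa 0 + ∫ t in Ioc (0:ℝ) x, Qda t := by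
    intro x hx
    have hQa0 : Qa 0 = P.a 0 := by simp [hQa_def]
    by_cases hhalf : x ≤ 1/2
    · have hx2 : 2 * x ∈ Icc (0:ℝ) 1 := ⟨by linarith [hx.1], by linarith⟩
      rw [hint_da x ⟨hx.1, hhalf⟩, hQa0]
      simp only [hQa_def, if_pos hhalf]
      exact P.a_ftc (2 * x) hx2
    · push_neg at hhalf
      have hsplit : Ioc (0:ℝ) x = Ioc (0:ℝ) (1/2) ∪ Ioc (1/2:ℝ) x :=
        (Ioc_union_Ioc_eq_Ioc (by norm_num) (le_of_lt hhalf)).symm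
      have hi1 : IntegrableOn Qda (Ioc (0:ℝ) (1/2)) volume :=
        hQda_int.mono_set (fun t ht => ⟨ht.1, by linarith [ht.2]⟩)
      have hi2 : IntegrableOn Qda (Ioc (1/2:ℝ) x) volume := by
        rw [integrableOn_congr_fun (g := fun _ => 2 * (s₁ - s₂))
          (fun t ht => by simp only [hQda_def, if_neg (not_lt.mpr (le_of_lt ht.1))])
          measurableSet_Ioc]
        exact (integrableOn_const_iff enorm_ne_top).mpr (Or.inr (by rw [Real.volume_Ioc]; exact ENNReal.ofReal_lt_top))
      have h1 : ∫ t in Ioc (0:ℝ) (1/2), Qda t = s₂ := by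
        rw [hint_da (1/2) ⟨by norm_num, le_rfl⟩]
        have := P.a_ftc 1 ⟨zero_le_one, le_rfl⟩
        rw [haT, ha0] at this
        norm_num
        norm_num at this
        linarith [this]
      have h2 : ∫ t in Ioc (1/2:ℝ) x, Qda t = (x - 1/2) * (2 * (s₁ - s₂)) := by
        rw [setIntegral_congr_fun (g := fun _ => 2 * (s₁ - s₂)) measurableSet_Ioc
          (fun t ht => by simp only [hQda_def, if_neg (not_lt.mpr (le_of_lt ht.1))])]
        rw [setIntegral_const, Real.volume_real_Ioc_of_le (by linarith), smul_eq_mul]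
      rw [hsplit, setIntegral_union (Ioc_disjoint_Ioc_of_le le_rfl) measurableSet_Ioc hi1 hi2, h1, h2,
        hQa0, ha0]
      simp only [hQa_def, if_neg (not_le.mpr hhalf)]
      ring
  -- FTC for Qb
  have hQb_ftc : ∀ x ∈ Icc (0:ℝ) 1, Qb x = Qb 0 + ∫ t in Ioc (0:ℝ) x, Qdb t := by
    intro x hx
    have hQb0 : Qb 0 = P.b 0 := by simp [hQb_def]
    by_cases hhalf : x ≤ 1/2
    · have hx2 : 2 * x ∈ Icc (0:ℝ) 1 := ⟨by linarith [hx.1], by linarith⟩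
      rw [hint_db x ⟨hx.1, hhalf⟩, hQb0]
      simp only [hQb_def, if_pos hhalf]
      exact P.b_ftc (2 * x) hx2
    · push_neg at hhalf
      have hsplit : Ioc (0:ℝ) x = Ioc (0:ℝ) (1/2) ∪ Ioc (1/2:ℝ) x :=
        (Ioc_union_Ioc_eq_Ioc (by norm_num) (le_of_lt hhalf)).symm
      have hi1 : IntegrableOn Qdb (Ioc (0:ℝ) (1/2)) volume :=
        hQdb_int.mono_set (fun t ht => ⟨ht.1, by linarith [ht.2]⟩)
      have hi2 : IntegrableOn Qdb (Ioc (1/2:ℝ) x) volume := by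
        rw [integrableOn_congr_fun (g := fun _ => (0:ℝ))
          (fun t ht => by simp only [hQdb_def, if_neg (not_lt.mpr (le_of_lt ht.1))])
          measurableSet_Ioc]
        exact (integrableOn_const_iff enorm_ne_top).mpr (Or.inr (by rw [Real.volume_Ioc]; exact ENNReal.ofReal_lt_top))
      have h1 : ∫ t in Ioc (0:ℝ) (1/2), Qdb t = 0 := by
        rw [hint_db (1/2) ⟨by norm_num, le_rfl⟩]
        have := P.b_ftc 1 ⟨zero_le_one, le_rfl⟩
        rw [hbT, hb0] at this
        norm_num
        norm_num at this
        linarith [this]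
      have h2 : ∫ t in Ioc (1/2:ℝ) x, Qdb t = 0 := by
        rw [setIntegral_congr_fun (g := fun _ => (0:ℝ)) measurableSet_Ioc
          (fun t ht => by simp only [hQdb_def, if_neg (not_lt.mpr (le_of_lt ht.1))])]
        simp
      rw [hsplit, setIntegral_union (Ioc_disjoint_Ioc_of_le le_rfl) measurableSet_Ioc hi1 hi2, h1, h2,
        hQb0, hb0]
      simp only [hQb_def, if_neg (not_le.mpr hhalf)]
      ring
  set Q : H1Pair 1 := ⟨Qa, Qb, Qda, Qdb, hQda_mem, hQdb_mem, hQa_ftc, hQb_ftc⟩ with hQ_def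
  have hQadm : Q.Admissible s₁ := by
    refine ⟨?_, ?_, ?_, ?_, ?_⟩
    · intro t ht
      show Qb t ∈ Icc (0:ℝ) 1
      by_cases h : t ≤ 1/2
      · simp only [hQb_def, if_pos h]
        exact hb01 (2 * t) ⟨by linarith [ht.1], by linarith⟩
      · simp only [hQb_def, if_neg h]
        exact ⟨zero_le_one, le_rfl⟩
    · show Qa 0 = 0
      simp only [hQa_def, if_pos (by norm_num : (0:ℝ) ≤ 1/2), mul_zero]
      exact ha0
    · show Qa 1 = s₁
      simp only [hQa_def, if_neg (by norm_num : ¬ (1:ℝ) ≤ 1/2)]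
      ring
    · show Qb 0 = 1
      simp only [hQb_def, if_pos (by norm_num : (0:ℝ) ≤ 1/2), mul_zero]
      exact hb0
    · show Qb 1 = 1
      simp only [hQb_def, if_neg (by norm_num : ¬ (1:ℝ) ≤ 1/2)]
  refine ⟨Q, hQadm, ?_⟩
  -- energy computation
  have hEQ : surfEnergy f l Q = ∫⁻ t in Ioo (0:ℝ) 1, intg f l Q t := rfl
  have hEP : surfEnergy f l P = ∫⁻ t in Ioo (0:ℝ) 1, intg f l P t := rfl
  have hsplit : Ioo (0:ℝ) 1 = Ioo (0:ℝ) (1/2) ∪ Ico (1/2:ℝ) 1 :=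
    (Ioo_union_Ico_eq_Ioo (by norm_num) (by norm_num)).symm
  have hdisj : Disjoint (Ioo (0:ℝ) (1/2)) (Ico (1/2:ℝ) 1) := by
    rw [Set.disjoint_left]
    rintro t ⟨-, h1⟩ ⟨h2, -⟩
    linarith
  have hGP : AEMeasurable (intg f l P) (volume.restrict (Ioo (0:ℝ) 1)) :=
    intg_aemeasurable hf P ⟨hb01, ha0, haT, hb0, hbT⟩
  have part1 : ∫⁻ t in Ioo (0:ℝ) (1/2), intg f l Q t = surfEnergy f l P := by
    have e1 : ∫⁻ t in Ioo (0:ℝ) (1/2), intg f l Q t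
        = ∫⁻ t in Ioo (0:ℝ) (1/2), 2 * intg f l P (2 * t) := by
      refine setLIntegral_congr_fun measurableSet_Ioo (fun t ht => ?_)
      have hlt : t < 1/2 := ht.2
      have hle : t ≤ 1/2 := le_of_lt hlt
      show intg f l Q t = 2 * intg f l P (2 * t)
      have hQb : Q.b t = P.b (2 * t) := by simp only [hQ_def, hQb_def, if_pos hle]
      have hQda : Q.da t = 2 * P.da (2 * t) := by simp only [hQ_def, hQda_def, if_pos hlt]
      have hQdb : Q.db t = 2 * P.db (2 * t) := by simp only [hQ_def, hQdb_def, if_pos hlt]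
      unfold intg
      rw [hQb, hQda, hQdb]
      have harg : (damageExt f l (P.b (2 * t)))^2 * (2 * P.da (2 * t))^2
          + (1 - P.b (2 * t))^2 * (2 * P.db (2 * t))^2
          = 4 * ((damageExt f l (P.b (2 * t)))^2 * (P.da (2 * t))^2
            + (1 - P.b (2 * t))^2 * (P.db (2 * t))^2) := by ring
      rw [harg, Real.sqrt_mul (by norm_num : (0:ℝ) ≤ 4),
        show Real.sqrt 4 = 2 by
          rw [show (4:ℝ) = 2^2 by norm_num, Real.sqrt_sq (by norm_num : (0:ℝ) ≤ 2)]]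
      rw [ENNReal.ofReal_mul (by norm_num : (0:ℝ) ≤ 2)]
      norm_num
    rw [e1, lintegral_const_mul' 2 _ (by norm_num : (2:ℝ≥0∞) ≠ ⊤),
      cov_lintegral hGP, ← mul_assoc, hEP]
    have h2 : (2:ℝ≥0∞) * ENNReal.ofReal (1/2) = 1 := by
      rw [show (2:ℝ≥0∞) = ENNReal.ofReal 2 by simp,
        ← ENNReal.ofReal_mul (by norm_num : (0:ℝ) ≤ 2)]
      norm_num
    rw [h2, one_mul]
  have part2 : ∫⁻ t in Ico (1/2:ℝ) 1, intg f l Q t = ENNReal.ofReal (l * |s₁ - s₂|) := by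
    have e1 : ∫⁻ t in Ico (1/2:ℝ) 1, intg f l Q t
        = ∫⁻ _ in Ico (1/2:ℝ) 1, ENNReal.ofReal (2 * (l * |s₁ - s₂|)) := by
      refine setLIntegral_congr_fun measurableSet_Ico (fun t ht => ?_)
      have hQb : Q.b t = 1 := by
        by_cases h : t ≤ 1/2
        · have ht2 : t = 1/2 := le_antisymm h ht.1
          simp only [hQ_def, hQb_def, if_pos h, ht2]
          norm_num
          exact hbT
        · simp only [hQ_def, hQb_def, if_neg h]
      have hQda : Q.da t = 2 * (s₁ - s₂) := by
        simp only [hQ_def, hQda_def, if_neg (not_lt.mpr ht.1)]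
      have hQdb : Q.db t = 0 := by
        simp only [hQ_def, hQdb_def, if_neg (not_lt.mpr ht.1)]
      unfold intg
      rw [hQb, hQda, hQdb]
      have hd1 : damageExt f l 1 = l := if_pos rfl
      rw [hd1]
      congr 1
      have harg : l^2 * (2 * (s₁ - s₂))^2 + (1 - 1)^2 * (0:ℝ)^2
          = (l * (2 * (s₁ - s₂)))^2 := by ring
      rw [harg, Real.sqrt_sq_eq_abs, abs_mul, abs_mul, abs_of_nonneg hl0,
        abs_of_nonneg (by norm_num : (0:ℝ) ≤ 2)]
      ring
    rw [e1, setLIntegral_const, Real.volume_Ico,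
      ← ENNReal.ofReal_mul (by positivity : (0:ℝ) ≤ 2 * (l * |s₁ - s₂|))]
    congr 1
    ring
  rw [hEQ, hsplit, lintegral_union measurableSet_Ico hdisj, part1, part2]

lemma key_ineq {f : ℝ → ℝ} {l : ℝ} (hf : AdmissibleDamage f l) (s₁ s₂ : ℝ) :
    (⨅ (P : H1Pair 1) (_ : P.Admissible s₁), surfEnergy f l P)
      ≤ (⨅ (P : H1Pair 1) (_ : P.Admissible s₂), surfEnergy f l P)
        + ENNReal.ofReal (l * |s₁ - s₂|) := by
  rw [ENNReal.iInf_add]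
  refine le_iInf fun P => ?_
  by_cases hP : P.Admissible s₂
  · rw [iInf_pos hP]
    obtain ⟨Q, hQ, hle⟩ := exists_competitor hf s₁ s₂ P hP
    exact le_trans (iInf_le_of_le Q (iInf_le _ hQ)) hle
  · rw [iInf_neg hP, top_add]
    exact le_top

end Aux2


/-- The surface energy density `g` is Lipschitz continuous on `[0,∞)`
with Lipschitz constant `ℓ`: `|g(s₁) − g(s₂)| ≤ ℓ |s₁ − s₂|` for all `s₁, s₂ ≥ 0`. -/
theorem surfDensity_lipschitz (f : ℝ → ℝ) (l : ℝ)
    (hf : AdmissibleDamage f l) :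
    ∀ s₁ s₂ : ℝ, 0 ≤ s₁ → 0 ≤ s₂ →
      |surfDensity f l s₁ - surfDensity f l s₂| ≤ l * |s₁ - s₂| := by
  intro s₁ s₂ hs₁ hs₂
  have hl0 : 0 ≤ l := le_of_lt hf.2.2.2.2.1
  have h12 := key_ineq hf s₁ s₂
  have h21 := key_ineq hf s₂ s₁
  rw [abs_sub_comm s₂ s₁] at h21
  have hc_ne : ENNReal.ofReal (l * |s₁ - s₂|) ≠ ⊤ := ENNReal.ofReal_ne_top
  have hnn : 0 ≤ l * |s₁ - s₂| := mul_nonneg hl0 (abs_nonneg _)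
  simp only [surfDensity]
  set I₁ := ⨅ (P : H1Pair 1) (_ : P.Admissible s₁), surfEnergy f l P with hI₁
  set I₂ := ⨅ (P : H1Pair 1) (_ : P.Admissible s₂), surfEnergy f l P with hI₂
  rcases eq_or_ne I₁ ⊤ with h1 | h1
  · have h2 : I₂ = ⊤ := by
      by_contra h2
      exact (ne_top_of_le_ne_top (ENNReal.add_ne_top.mpr ⟨h2, hc_ne⟩) h12) h1
    rw [h1, h2]
    simpa using hnn
  · have h2 : I₂ ≠ ⊤ := by
      intro h2
      rw [h2, top_le_iff] at h21
      exact (ENNReal.add_ne_top.mpr ⟨h1, hc_ne⟩) h21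
    have e12 : I₁.toReal ≤ I₂.toReal + l * |s₁ - s₂| := by
      have h := ENNReal.toReal_mono (ENNReal.add_ne_top.mpr ⟨h2, hc_ne⟩) h12
      rwa [ENNReal.toReal_add h2 hc_ne, ENNReal.toReal_ofReal hnn] at h
    have e21 : I₂.toReal ≤ I₁.toReal + l * |s₁ - s₂| := by
      have h := ENNReal.toReal_mono (ENNReal.add_ne_top.mpr ⟨h1, hc_ne⟩) h21
      rwa [ENNReal.toReal_add h1 hc_ne, ENNReal.toReal_ofReal hnn] at h
    rw [abs_sub_le_iff]
    constructor <;> linarith
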